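/- Let α, λ be distinct positive restricted roots such that λ − α is not a root. Then for any X_α ∈ g_α and X_λ ∈ g_λ, one has [[X_α, X_λ], θX_α] = −|α|² A_{α,λ} ⟨X_α, X_α⟩ X_λ, where A_{α,λ} = 2⟨α,λ⟩/|α|² is the Cartan integer. -/

import Mathlib

/-!
Since `λ - α` is not a root, `[X_λ, θX_α] = 0`, so the Jacobi identity gives
`[[X_α, X_λ], θX_α] = [[X_α, θX_α], X_λ]`. The bracket `[X_α, θX_α]` is `θ`-anti-invariant and
commutes with `a`, hence lies in `a` by maximality; invariance of the Killing form `B` identifies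
it as `B(X_α, θX_α) H_α`, and `[H_α, X_λ] = λ(H_α) X_λ = B(H_α, H_λ) X_λ`.
-/

/-- Restricted root space of the functional `l` relative to `a`. -/
def rootSpaceIn {g : Type*} [LieRing g] [LieAlgebra ℝ g] (a : Submodule ℝ g)
    (l : g →ₗ[ℝ] ℝ) : Submodule ℝ g where
  carrier := {X | ∀ H ∈ a, ⁅H, X⁆ = l H • X}
  add_mem' := by
    intro x y hx hy H hH
    simp only [Set.mem_setOf_eq] at hx hy
    rw [lie_add, hx H hH, hy H hH, smul_add]
  zero_mem' := by intro H hH; simp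
  smul_mem' := by
    intro c x hx H hH
    simp only [Set.mem_setOf_eq] at hx
    rw [lie_smul, hx H hH, smul_comm]

/-- The metric inner product on `n`: one half of the inner product
`⟨x, y⟩_{B_θ} = -B(x, θ y)`. -/
noncomputable def mI {g : Type*} [LieRing g] [LieAlgebra ℝ g]
    (θ : g →ₗ⁅ℝ⁆ g) (x y : g) : ℝ :=
  (1 / 2) * (-(killingForm ℝ g x (θ y)))

/-- The Cartan integer `A_{α,λ} = 2⟨α,λ⟩/|α|²`, expressed through the vectors
`H_α`, `H_λ` (on `a` the `B_θ` inner product coincides with the Killing form`). -/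
noncomputable def cartanInt {g : Type*} [LieRing g] [LieAlgebra ℝ g]
    (Ha Hl : g) : ℝ :=
  2 * killingForm ℝ g Ha Hl / killingForm ℝ g Ha Ha

theorem lie_lie_eq_lie_lie_of_lie_eq_zero {L : Type*} [LieRing L] {X Y Z : L}
    (h : ⁅Y, Z⁆ = 0) : ⁅⁅X, Y⁆, Z⁆ = ⁅⁅X, Z⁆, Y⁆ := by
  have hjacobi := leibniz_lie X Y Z
  rw [h, lie_zero, ← lie_skew Y] at hjacobi
  exact (eq_neg_of_add_eq_zero_left hjacobi.symm).trans (neg_neg _)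

section RootSpaces

variable {g : Type*} [LieRing g] [LieAlgebra ℝ g] {a : Submodule ℝ g}

theorem lie_mem_rootSpaceIn_add {l m : g →ₗ[ℝ] ℝ} {X Y : g} (hX : X ∈ rootSpaceIn a l)
    (hY : Y ∈ rootSpaceIn a m) : ⁅X, Y⁆ ∈ rootSpaceIn a (l + m) := by
  intro H hH
  rw [leibniz_lie, hX H hH, hY H hH, smul_lie, lie_smul, LinearMap.add_apply, add_smul]

theorem lie_eq_zero_of_rootSpaceIn_add_eq_bot {l m : g →ₗ[ℝ] ℝ} {X Y : g}
    (hX : X ∈ rootSpaceIn a l) (hY : Y ∈ rootSpaceIn a m) (hbot : rootSpaceIn a (l + m) = ⊥) :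
    ⁅X, Y⁆ = 0 := by
  simpa [hbot] using lie_mem_rootSpaceIn_add hX hY

theorem map_mem_rootSpaceIn_neg {θ : g →ₗ⁅ℝ⁆ g} (hθ2 : ∀ x, θ (θ x) = x)
    (haθ : ∀ H ∈ a, θ H = -H) {l : g →ₗ[ℝ] ℝ} {X : g} (hX : X ∈ rootSpaceIn a l) :
    θ X ∈ rootSpaceIn a (-l) := by
  intro H hH
  calc ⁅H, θ X⁆ = θ ⁅θ H, X⁆ := by rw [LieHom.map_lie, hθ2]
    _ = (-l) H • θ X := by
      rw [haθ H hH, neg_lie, hX H hH, map_neg, map_smul, LinearMap.neg_apply, neg_smul]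

theorem rootSpaceIn_sub_eq_bot {Sp : Finset (g →ₗ[ℝ] ℝ)}
    (hroots : ∀ l : g →ₗ[ℝ] ℝ,
      ((∃ H ∈ a, l H ≠ 0) ∧ rootSpaceIn a l ≠ ⊥) ↔ (l ∈ Sp ∨ -l ∈ Sp))
    {α lam : g →ₗ[ℝ] ℝ} (hne : ∃ H ∈ a, α H ≠ lam H) (hnr : lam - α ∉ Sp ∧ α - lam ∉ Sp) :
    rootSpaceIn a (lam - α) = ⊥ := by
  by_contra hbot
  obtain ⟨H, hH, hαH⟩ := hne
  have hnonzero : (lam - α) H ≠ 0 := sub_ne_zero.mpr (Ne.symm hαH)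
  rcases (hroots (lam - α)).mp ⟨⟨H, hH, hnonzero⟩, hbot⟩ with h | h
  · exact hnr.1 h
  · exact hnr.2 (neg_sub lam α ▸ h)

theorem lie_map_self_mem {θ : g →ₗ⁅ℝ⁆ g} (hθ2 : ∀ x, θ (θ x) = x)
    (haθ : ∀ H ∈ a, θ H = -H)
    (hamax : ∀ x : g, θ x = -x → (∀ H ∈ a, ⁅H, x⁆ = (0 : g)) → x ∈ a)
    {l : g →ₗ[ℝ] ℝ} {X : g} (hX : X ∈ rootSpaceIn a l) : ⁅X, θ X⁆ ∈ a := by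
  refine hamax _ (by rw [LieHom.map_lie, hθ2, ← lie_skew]) fun H hH => ?_
  simpa using lie_mem_rootSpaceIn_add hX (map_mem_rootSpaceIn_neg hθ2 haθ hX) H hH

theorem killingForm_lie_of_mem_rootSpaceIn {l : g →ₗ[ℝ] ℝ} {X : g}
    (hX : X ∈ rootSpaceIn a l) {H : g} (hH : H ∈ a) (Y : g) :
    killingForm ℝ g H ⁅X, Y⁆ = l H * killingForm ℝ g X Y := by
  rw [← LieModule.traceForm_apply_lie_apply, hX H hH, map_smul, LinearMap.smul_apply,
    smul_eq_mul]

theorem eq_zero_of_killingForm_self_eq_zero {θ : g →ₗ⁅ℝ⁆ g}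
    (hθpos : ∀ x : g, x ≠ 0 → 0 < -(killingForm ℝ g x (θ x)))
    (haθ : ∀ H ∈ a, θ H = -H) {H : g} (hH : H ∈ a) (h : killingForm ℝ g H H = 0) : H = 0 := by
  by_contra hne
  have hpos := hθpos H hne
  rw [haθ H hH, map_neg, neg_neg, h] at hpos
  exact lt_irrefl 0 hpos

theorem killingForm_mul_cartanInt {θ : g →ₗ⁅ℝ⁆ g}
    (hθpos : ∀ x : g, x ≠ 0 → 0 < -(killingForm ℝ g x (θ x)))
    (haθ : ∀ H ∈ a, θ H = -H) {Ha : g} (hHa : Ha ∈ a) (Hl : g) :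
    killingForm ℝ g Ha Ha * cartanInt Ha Hl = 2 * killingForm ℝ g Ha Hl := by
  by_cases h : killingForm ℝ g Ha Ha = 0
  · simp [eq_zero_of_killingForm_self_eq_zero hθpos haθ hHa h]
  · rw [cartanInt, mul_div_cancel₀ _ h]

theorem lie_map_self_eq_smul {θ : g →ₗ⁅ℝ⁆ g} (hθ2 : ∀ x, θ (θ x) = x)
    (hθpos : ∀ x : g, x ≠ 0 → 0 < -(killingForm ℝ g x (θ x)))
    (haθ : ∀ H ∈ a, θ H = -H)
    (hamax : ∀ x : g, θ x = -x → (∀ H ∈ a, ⁅H, x⁆ = (0 : g)) → x ∈ a)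
    {α : g →ₗ[ℝ] ℝ} {Ha : g} (hHa : Ha ∈ a ∧ ∀ H ∈ a, killingForm ℝ g Ha H = α H)
    {X : g} (hX : X ∈ rootSpaceIn a α) :
    ⁅X, θ X⁆ = killingForm ℝ g X (θ X) • Ha := by
  set W := ⁅X, θ X⁆ - killingForm ℝ g X (θ X) • Ha
  have hWa : W ∈ a :=
    a.sub_mem (lie_map_self_mem hθ2 haθ hamax hX) (a.smul_mem _ hHa.1)
  -- `W ∈ a` is `B`-orthogonal to `a`, in particular to itself
  have hWW : killingForm ℝ g W W = 0 := by
    rw [map_sub (killingForm ℝ g W), killingForm_lie_of_mem_rootSpaceIn hX hWa, map_smul,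
      LieModule.traceForm_comm ℝ g g W Ha, hHa.2 W hWa, smul_eq_mul, mul_comm, sub_self]
  exact sub_eq_zero.mp (eq_zero_of_killingForm_self_eq_zero hθpos haθ hWa hWW)

end RootSpaces

theorem stmt1_general {g : Type*} [LieRing g] [LieAlgebra ℝ g]
    (θ : g →ₗ⁅ℝ⁆ g) (hθ2 : ∀ x, θ (θ x) = x)
    (hθpos : ∀ x : g, x ≠ 0 → 0 < -(killingForm ℝ g x (θ x)))
    (a : Submodule ℝ g)
    (haθ : ∀ H ∈ a, θ H = -H)
    (hamax : ∀ x : g, θ x = -x → (∀ H ∈ a, ⁅H, x⁆ = (0 : g)) → x ∈ a)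
    -- the set of positive restricted roots
    (Sp : Finset (g →ₗ[ℝ] ℝ))
    (hroots : ∀ l : g →ₗ[ℝ] ℝ,
      ((∃ H ∈ a, l H ≠ 0) ∧ rootSpaceIn a l ≠ ⊥) ↔ (l ∈ Sp ∨ -l ∈ Sp))
    (α lam : g →ₗ[ℝ] ℝ)
    -- `α` and `λ` are distinct (as restricted roots, i.e. on `a`)
    (hne : ∃ H ∈ a, α H ≠ lam H)
    -- `λ - α` is not a root
    (hnr : lam - α ∉ Sp ∧ α - lam ∉ Sp)
    -- the vectors `H_α`, `H_λ` representing the roots via the Killing form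
    (Ha : g) (hHa : Ha ∈ a ∧ ∀ H ∈ a, killingForm ℝ g Ha H = α H)
    (Hl : g) (hHl : Hl ∈ a ∧ ∀ H ∈ a, killingForm ℝ g Hl H = lam H)
    (Xa : g) (hXa : Xa ∈ rootSpaceIn a α)
    (Xl : g) (hXl : Xl ∈ rootSpaceIn a lam) :
    ⁅⁅Xa, Xl⁆, θ Xa⁆
      = (-(killingForm ℝ g Ha Ha * cartanInt Ha Hl * mI θ Xa Xa)) • Xl := by
  have hXlθXa : ⁅Xl, θ Xa⁆ = 0 :=
    lie_eq_zero_of_rootSpaceIn_add_eq_bot hXl (map_mem_rootSpaceIn_neg hθ2 haθ hXa)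
      (rootSpaceIn_sub_eq_bot hroots hne hnr)
  calc ⁅⁅Xa, Xl⁆, θ Xa⁆ = ⁅⁅Xa, θ Xa⁆, Xl⁆ := lie_lie_eq_lie_lie_of_lie_eq_zero hXlθXa
    _ = (killingForm ℝ g Xa (θ Xa) * killingForm ℝ g Hl Ha) • Xl := by
      rw [lie_map_self_eq_smul hθ2 hθpos haθ hamax hHa hXa, smul_lie, hXl Ha hHa.1,
        hHl.2 Ha hHa.1, smul_smul]
    _ = _ := by
      rw [killingForm_mul_cartanInt hθpos haθ hHa.1, mI, LieModule.traceForm_comm ℝ g g Hl Ha]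
      congr 1
      ring

/-- Let `α, λ` be distinct positive restricted roots such that
`λ - α` is not a root.  Then for any `X_α ∈ g_α` and `X_λ ∈ g_λ`,
`[[X_α, X_λ], θ X_α] = -|α|² A_{α,λ} ⟨X_α, X_α⟩ X_λ`. -/
theorem stmt1 {g : Type*} [LieRing g] [LieAlgebra ℝ g] [FiniteDimensional ℝ g]
    [LieAlgebra.IsSemisimple ℝ g]
    (θ : g →ₗ⁅ℝ⁆ g) (hθ2 : ∀ x, θ (θ x) = x)
    (hθpos : ∀ x : g, x ≠ 0 → 0 < -(killingForm ℝ g x (θ x)))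
    (a : Submodule ℝ g)
    (haθ : ∀ H ∈ a, θ H = -H)
    (haab : ∀ H ∈ a, ∀ H' ∈ a, ⁅H, H'⁆ = (0 : g))
    (hamax : ∀ x : g, θ x = -x → (∀ H ∈ a, ⁅H, x⁆ = (0 : g)) → x ∈ a)
    -- the set of positive restricted roots
    (Sp : Finset (g →ₗ[ℝ] ℝ))
    (hroots : ∀ l : g →ₗ[ℝ] ℝ,
      ((∃ H ∈ a, l H ≠ 0) ∧ rootSpaceIn a l ≠ ⊥) ↔ (l ∈ Sp ∨ -l ∈ Sp))
    (α lam : g →ₗ[ℝ] ℝ) (hαSp : α ∈ Sp) (hlamSp : lam ∈ Sp)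
    -- `α` and `λ` are distinct (as restricted roots, i.e. on `a`)
    (hne : ∃ H ∈ a, α H ≠ lam H)
    -- `λ - α` is not a root
    (hnr : lam - α ∉ Sp ∧ α - lam ∉ Sp)
    -- the vectors `H_α`, `H_λ` representing the roots via the Killing form
    (Ha : g) (hHa : Ha ∈ a ∧ ∀ H ∈ a, killingForm ℝ g Ha H = α H)
    (Hl : g) (hHl : Hl ∈ a ∧ ∀ H ∈ a, killingForm ℝ g Hl H = lam H)
    (Xa : g) (hXa : Xa ∈ rootSpaceIn a α)
    (Xl : g) (hXl : Xl ∈ rootSpaceIn a lam) :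
    ⁅⁅Xa, Xl⁆, θ Xa⁆
      = (-(killingForm ℝ g Ha Ha * cartanInt Ha Hl * mI θ Xa Xa)) • Xl :=
  stmt1_general θ hθ2 hθpos a haθ hamax Sp hroots α lam hne hnr Ha hHa Hl hHl Xa hXa Xl hXl
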